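/- arXiv:2601.00338 — 4 statements merged into one kernel-verified Lean document; each statement's English description precedes it below -/
import Mathlib

section
/- (Injectivity radius estimate, Proposition 8 / equation (2).) There exist universal constants 0 < c ≤ C such that for every ℓ with 0 < ℓ ≤ 2·arsinh(1) and every ρ with 0 ≤ ρ ≤ arsinh(1/sinh(ℓ/2)), one has cosh(2·c·ℓ·cosh ρ) ≤ 1 + (cosh(ℓ) − 1)·cosh²(ρ) ≤ cosh(2·C·ℓ·cosh ρ). Equivalently, the quantity r(ρ, ℓ) := (1/2)·arccosh(1 + (cosh ℓ − 1)·cosh²ρ) (the injectivity radius at distance ρ from the waist of an infinite hyperbolic collar of waist length ℓ) is comparable to ℓ·cosh(ρ), with universal implied constants, throughout this range of ℓ and ρ. -/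
private lemma sinh_le_two_mul {s : ℝ} (h0 : 0 ≤ s) (h1 : s ≤ 1) :
    Real.sinh s ≤ 2 * s := by
  have habs : |s| ≤ 1 := by rw [abs_of_nonneg h0]; exact h1
  have habs' : |(-s)| ≤ 1 := by rwa [abs_neg]
  have hp := abs_le.1 (Real.abs_exp_sub_one_sub_id_le habs)
  have hm := abs_le.1 (Real.abs_exp_sub_one_sub_id_le habs')
  rw [Real.sinh_eq]
  nlinarith [hp.2, hm.1, sq_nonneg s]

private lemma self_le_sinh' {s : ℝ} (h0 : 0 ≤ s) : s ≤ Real.sinh s := by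
  rcases eq_or_lt_of_le h0 with h | h
  · simp [← h]
  · exact (Real.self_lt_sinh_iff.2 h).le

private lemma cosh_eq_one_add {x : ℝ} : Real.cosh x = 1 + 2 * Real.sinh (x / 2) ^ 2 := by
  have := Real.cosh_two_mul (x / 2)
  have h2 : 2 * (x / 2) = x := by ring
  rw [h2] at this
  rw [this, Real.cosh_sq]
  ring

/-- Injectivity radius estimate (Proposition 8 / equation (2)): there are universal constants
`0 < c ≤ C` such that for all `0 < ℓ ≤ 2 arsinh 1` and `0 ≤ ρ ≤ arsinh (1 / sinh (ℓ/2))`,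
`cosh (2 c ℓ cosh ρ) ≤ 1 + (cosh ℓ - 1) cosh² ρ ≤ cosh (2 C ℓ cosh ρ)`; i.e. the injectivity
radius `r(ρ, ℓ) = (1/2) arccosh (1 + (cosh ℓ - 1) cosh² ρ)` is comparable to `ℓ cosh ρ`. -/
theorem injectivity_radius_estimate :
    ∃ c C : ℝ, 0 < c ∧ c ≤ C ∧
      ∀ ℓ ρ : ℝ, 0 < ℓ → ℓ ≤ 2 * Real.arsinh 1 →
        0 ≤ ρ → ρ ≤ Real.arsinh (1 / Real.sinh (ℓ / 2)) →
          Real.cosh (2 * c * ℓ * Real.cosh ρ) ≤ 1 + (Real.cosh ℓ - 1) * Real.cosh ρ ^ 2 ∧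
          1 + (Real.cosh ℓ - 1) * Real.cosh ρ ^ 2 ≤ Real.cosh (2 * C * ℓ * Real.cosh ρ) := by
  refine ⟨1/4, 2, by norm_num, by norm_num, ?_⟩
  intro ℓ ρ hℓ hℓ2 hρ hρ2
  -- basic facts
  have harsinh : Real.arsinh 1 ≤ 1 := by
    have h1 : (1 : ℝ) ≤ Real.sinh 1 := (Real.self_lt_sinh_iff.2 one_pos).le
    calc Real.arsinh 1 ≤ Real.arsinh (Real.sinh 1) := Real.arsinh_le_arsinh.2 h1
      _ = 1 := Real.arsinh_sinh 1
  have hℓle2 : ℓ ≤ 2 := by linarith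
  have hsh : Real.sinh ρ ≤ 1 / Real.sinh (ℓ / 2) := by
    have := Real.sinh_le_sinh.2 hρ2
    rwa [Real.sinh_arsinh] at this
  have hshpos : (0 : ℝ) < Real.sinh (ℓ / 2) := Real.sinh_pos_iff.2 (by linarith)
  have hhalf : ℓ / 2 ≤ Real.sinh (ℓ / 2) := self_le_sinh' (by linarith)
  have hsinhρ : 0 ≤ Real.sinh ρ := Real.sinh_nonneg_iff.2 hρ
  have hcoshρ : 1 ≤ Real.cosh ρ := Real.one_le_cosh ρ
  -- sinh ρ ≤ 2/ℓ
  have hsh2 : Real.sinh ρ ≤ 2 / ℓ := by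
    have h1 : (1 : ℝ) / Real.sinh (ℓ / 2) ≤ 2 / ℓ := by
      rw [div_le_div_iff₀ hshpos hℓ]
      nlinarith
    linarith
  -- (ℓ cosh ρ)^2 ≤ 8
  have hsq : (ℓ * Real.cosh ρ) ^ 2 ≤ 8 := by
    have hcsq : Real.cosh ρ ^ 2 = Real.sinh ρ ^ 2 + 1 := Real.cosh_sq ρ
    have h1 : ℓ * Real.sinh ρ ≤ 2 := by
      have := mul_le_mul_of_nonneg_left hsh2 hℓ.le
      rwa [mul_div_cancel₀ 2 (ne_of_gt hℓ)] at this
    have h2 : (ℓ * Real.sinh ρ) ^ 2 ≤ 4 := by nlinarith [mul_nonneg hℓ.le hsinhρ]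
    have h3 : ℓ ^ 2 ≤ 4 := by nlinarith
    nlinarith [h2, h3, mul_pow ℓ (Real.sinh ρ) 2, mul_pow ℓ (Real.cosh ρ) 2, sq_nonneg ℓ]
  have hℓcosh : ℓ * Real.cosh ρ ≤ 3 := by nlinarith [mul_pos hℓ (lt_of_lt_of_le one_pos hcoshρ)]
  have hℓcoshpos : 0 < ℓ * Real.cosh ρ := mul_pos hℓ (lt_of_lt_of_le one_pos hcoshρ)
  -- cosh ℓ - 1 = 2 sinh(ℓ/2)^2 bounds
  have hlow : ℓ ^ 2 / 2 ≤ Real.cosh ℓ - 1 := by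
    rw [cosh_eq_one_add (x := ℓ)]
    nlinarith
  have hhigh : Real.cosh ℓ - 1 ≤ 2 * ℓ ^ 2 := by
    rw [cosh_eq_one_add (x := ℓ)]
    have hs : Real.sinh (ℓ / 2) ≤ 2 * (ℓ / 2) :=
      sinh_le_two_mul (by linarith) (by linarith)
    nlinarith
  constructor
  · -- lower bound with c = 1/4
    have harg : 2 * (1/4 : ℝ) * ℓ * Real.cosh ρ = ℓ * Real.cosh ρ / 2 := by ring
    rw [harg, cosh_eq_one_add]
    have hs4 : ℓ * Real.cosh ρ / 2 / 2 = ℓ * Real.cosh ρ / 4 := by ring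
    rw [hs4]
    have hle1 : ℓ * Real.cosh ρ / 4 ≤ 1 := by linarith
    have h0 : 0 ≤ ℓ * Real.cosh ρ / 4 := by positivity
    have hsb := sinh_le_two_mul h0 hle1
    have hsnn : 0 ≤ Real.sinh (ℓ * Real.cosh ρ / 4) := Real.sinh_nonneg_iff.2 h0
    nlinarith [sq_nonneg (Real.cosh ρ), sq_nonneg ℓ]
  · -- upper bound with C = 2
    have harg : 2 * (2 : ℝ) * ℓ * Real.cosh ρ = 4 * (ℓ * Real.cosh ρ) := by ring
    rw [harg, cosh_eq_one_add (x := 4 * (ℓ * Real.cosh ρ))]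
    have h0 : 0 ≤ 4 * (ℓ * Real.cosh ρ) / 2 := by positivity
    have hsb := self_le_sinh' h0
    nlinarith [sq_nonneg (Real.cosh ρ)]
end

section
/- (Counting group elements moving a point a small distance; equation (8).) For every ℓ > 0, every point z in the hyperbolic upper half-plane ℍ, and every nonzero integer k: if the hyperbolic distance satisfies dist(z, e^{kℓ}·z) ≤ 1, then |k| · ℓ · (|z| / Im z) ≤ √(2·(cosh(1) − 1)). Consequently, the set of nonzero integers k with dist(z, e^{kℓ}·z) ≤ 1 is finite and has cardinality at most 2·√(2·(cosh(1) − 1)) · (Im z) / (ℓ · |z|). -/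
/-!
Along the orbit of the dilations, `cosh d(z, e^s z) = 1 + (cosh s - 1) (|z| / Im z)²`, and
`cosh s - 1 = 2 sinh² (s/2) ≥ s² / 2`. Hence `d(z, e^{kℓ} z) ≤ 1` forces
`|k| ℓ |z| / Im z ≤ √(2 (cosh 1 - 1))`, i.e. `|k| ≤ C := √(2 (cosh 1 - 1)) Im z / (ℓ |z|)`,
and there are at most `2 ⌊C⌋ ≤ 2 C` nonzero integers of absolute value at most `C`.
-/

open scoped UpperHalfPlane

/-- The dilation `z ↦ e^s · z` of the upper half-plane (a hyperbolic isometry fixing the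
imaginary axis). -/
noncomputable def UpperHalfPlane.dilate (s : ℝ) (z : ℍ) : ℍ :=
  UpperHalfPlane.mk ((Real.exp s : ℂ) * (z : ℂ)) <| by
    rw [Complex.mul_im, Complex.ofReal_re, Complex.ofReal_im]
    simpa using mul_pos (Real.exp_pos s) z.im_pos

theorem Real.sq_div_two_le_cosh_sub_one (s : ℝ) : s ^ 2 / 2 ≤ Real.cosh s - 1 := by
  have hsinh : (s / 2) ^ 2 ≤ Real.sinh (s / 2) ^ 2 := by
    rw [sq_le_sq, Real.abs_sinh]
    exact Real.self_le_sinh_iff.2 (abs_nonneg _)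
  have hcosh : Real.cosh s = 1 + 2 * Real.sinh (s / 2) ^ 2 := by
    have := Real.cosh_two_mul (s / 2)
    rw [mul_div_cancel₀ s two_ne_zero, Real.cosh_sq] at this
    linarith
  linarith

namespace UpperHalfPlane

theorem coe_dilate (s : ℝ) (z : ℍ) : (dilate s z : ℂ) = Real.exp s * z := rfl

theorem im_dilate (s : ℝ) (z : ℍ) : (dilate s z).im = Real.exp s * z.im := by
  rw [← coe_im, coe_dilate, Complex.im_ofReal_mul, coe_im]

theorem cosh_dist_dilate (s : ℝ) (z : ℍ) :
    Real.cosh (dist z (dilate s z)) = 1 + (Real.cosh s - 1) * (‖(z : ℂ)‖ / z.im) ^ 2 := by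
  have hdist : dist (z : ℂ) (dilate s z) = |1 - Real.exp s| * ‖(z : ℂ)‖ := by
    rw [Complex.dist_eq, coe_dilate, ← one_sub_mul, norm_mul, ← Complex.ofReal_one,
      ← Complex.ofReal_sub, Complex.norm_real, Real.norm_eq_abs]
  rw [cosh_dist, hdist, im_dilate, Real.cosh_eq, Real.exp_neg, mul_pow, sq_abs]
  have hy := z.im_pos
  field_simp
  ring

theorem abs_mul_norm_div_im_le_of_dist_dilate_le {s r : ℝ} {z : ℍ}
    (hd : dist z (dilate s z) ≤ r) :
    |s| * (‖(z : ℂ)‖ / z.im) ≤ Real.sqrt (2 * (Real.cosh r - 1)) := by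
  have hcosh : Real.cosh (dist z (dilate s z)) ≤ Real.cosh r := by
    rw [Real.cosh_le_cosh, abs_of_nonneg dist_nonneg]
    exact hd.trans (le_abs_self r)
  rw [cosh_dist_dilate] at hcosh
  apply Real.le_sqrt_of_sq_le
  have hquad := Real.sq_div_two_le_cosh_sub_one s
  have hscaled : s ^ 2 / 2 * (‖(z : ℂ)‖ / z.im) ^ 2 ≤ (Real.cosh s - 1) * (‖(z : ℂ)‖ / z.im) ^ 2 := by
    gcongr
  rw [mul_pow, sq_abs]
  linarith

end UpperHalfPlane

theorem Int.finite_and_ncard_le_of_forall_abs_le {S : Set ℤ} {C : ℝ} (hC : 0 ≤ C)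
    (hS : ∀ k ∈ S, k ≠ 0 ∧ |(k : ℝ)| ≤ C) : S.Finite ∧ (S.ncard : ℝ) ≤ 2 * C := by
  set N : ℕ := ⌊C⌋₊
  set T : Finset ℤ := (Finset.Icc (-N : ℤ) N).erase 0
  have hST : S ⊆ T := by
    intro k hk
    obtain ⟨hk0, hkC⟩ := hS k hk
    have : k.natAbs ≤ N := Nat.le_floor (by rwa [Nat.cast_natAbs, Int.cast_abs])
    simp only [T, Finset.coe_erase, Finset.coe_Icc, Set.mem_sdiff, Set.mem_Icc,
      Set.mem_singleton_iff]
    exact ⟨by omega, hk0⟩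
  have hT : T.card = 2 * N := by
    rw [Finset.card_erase_of_mem (by simp), Int.card_Icc]
    omega
  refine ⟨T.finite_toSet.subset hST, ?_⟩
  calc (S.ncard : ℝ) ≤ T.card := by
        exact_mod_cast (Set.ncard_le_ncard hST T.finite_toSet).trans_eq (Set.ncard_coe_finset T)
    _ = 2 * N := by exact_mod_cast hT
    _ ≤ 2 * C := by gcongr; exact Nat.floor_le hC

/-- Equation (8): if `dist (z, e^{kℓ}·z) ≤ 1` for a nonzero integer `k`, then
`|k| ℓ |z| / Im z ≤ √(2 (cosh 1 - 1))`; consequently the set of such nonzero `k` is finite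
with cardinality at most `2 √(2 (cosh 1 - 1)) · Im z / (ℓ |z|)`. -/
theorem counting_small_translations (ℓ : ℝ) (hℓ : 0 < ℓ) (z : ℍ) :
    (∀ k : ℤ, k ≠ 0 → dist z (UpperHalfPlane.dilate (k * ℓ) z) ≤ 1 →
      |(k : ℝ)| * ℓ * (‖(z : ℂ)‖ / z.im) ≤ Real.sqrt (2 * (Real.cosh 1 - 1))) ∧
    {k : ℤ | k ≠ 0 ∧ dist z (UpperHalfPlane.dilate (k * ℓ) z) ≤ 1}.Finite ∧
    ({k : ℤ | k ≠ 0 ∧ dist z (UpperHalfPlane.dilate (k * ℓ) z) ≤ 1}.ncard : ℝ) ≤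
      2 * Real.sqrt (2 * (Real.cosh 1 - 1)) * z.im / (ℓ * ‖(z : ℂ)‖) := by
  have hbound : ∀ k : ℤ, k ≠ 0 → dist z (UpperHalfPlane.dilate (k * ℓ) z) ≤ 1 →
      |(k : ℝ)| * ℓ * (‖(z : ℂ)‖ / z.im) ≤ Real.sqrt (2 * (Real.cosh 1 - 1)) := by
    intro k _ hd
    simpa [abs_mul, abs_of_pos hℓ] using
      UpperHalfPlane.abs_mul_norm_div_im_le_of_dist_dilate_le hd
  have hz : 0 < ‖(z : ℂ)‖ := norm_pos_iff.2 z.ne_zero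
  have hk : ∀ k ∈ {k : ℤ | k ≠ 0 ∧ dist z (UpperHalfPlane.dilate (k * ℓ) z) ≤ 1},
      k ≠ 0 ∧ |(k : ℝ)| ≤ Real.sqrt (2 * (Real.cosh 1 - 1)) * z.im / (ℓ * ‖(z : ℂ)‖) := by
    rintro k ⟨hk0, hd⟩
    refine ⟨hk0, (le_div_iff₀ (by positivity)).2 ?_⟩
    calc |(k : ℝ)| * (ℓ * ‖(z : ℂ)‖) = |(k : ℝ)| * ℓ * (‖(z : ℂ)‖ / z.im) * z.im := by
          field_simp [z.im_pos.ne']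
      _ ≤ _ := mul_le_mul_of_nonneg_right (hbound k hk0 hd) z.im_pos.le
  obtain ⟨hfin, hcard⟩ := Int.finite_and_ncard_le_of_forall_abs_le (by positivity) hk
  exact ⟨hbound, hfin, hcard.trans_eq (by ring)⟩
end

section
/- There exists a universal constant C > 0 such that for every t > 0, the sum ∑_{m=1}^{∞} exp(m − m²/(16·t)) ≤ C·√t·e^{64·t}. -/
/-- There is a universal constant `C > 0` such that for every `t > 0`,
`∑_{m=1}^∞ exp (m - m² / (16 t)) ≤ C √t e^{64 t}`. -/
theorem drifted_gaussian_sum_le :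
    ∃ C : ℝ, 0 < C ∧ ∀ t : ℝ, 0 < t →
      Summable (fun m : ℕ => Real.exp (((m : ℝ) + 1) - ((m : ℝ) + 1) ^ 2 / (16 * t))) ∧
      ∑' m : ℕ, Real.exp (((m : ℝ) + 1) - ((m : ℝ) + 1) ^ 2 / (16 * t)) ≤
        C * Real.sqrt t * Real.exp (64 * t) := by
  refine ⟨32, by norm_num, fun t ht => ?_⟩
  have h32t : (0:ℝ) < 32 * t := by linarith
  set r : ℝ := Real.exp (-(1 / (32 * t))) with hrdef
  have hr0 : 0 < r := Real.exp_pos _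
  have hr1 : r < 1 := by
    have h0 : (0:ℝ) < 1 / (32 * t) := by positivity
    calc r = Real.exp (-(1 / (32 * t))) := hrdef
      _ < Real.exp 0 := Real.exp_lt_exp.mpr (by linarith)
      _ = 1 := Real.exp_zero
  -- termwise bound
  have hterm : ∀ m : ℕ, Real.exp (((m : ℝ) + 1) - ((m : ℝ) + 1) ^ 2 / (16 * t)) ≤
      Real.exp (8 * t) * r ^ (m + 1) := by
    intro m
    set x : ℝ := (m : ℝ) + 1 with hx
    have hx1 : (1:ℝ) ≤ x := hx ▸ le_add_of_nonneg_left (Nat.cast_nonneg m)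
    have hpow : r ^ (m + 1) = Real.exp ((m + 1 : ℕ) * (-(1 / (32 * t)))) := by
      rw [Real.exp_nat_mul]
    rw [hpow, ← Real.exp_add, Real.exp_le_exp]
    push_cast
    have e1 : x - x ^ 2 / (16 * t) - (8 * t + (x) * (-(1 / (32 * t)))) =
        -(((16 * t - x) ^ 2 + (x ^ 2 - x)) / (32 * t)) := by
      field_simp
      ring
    have hnum : 0 ≤ (16 * t - x) ^ 2 + (x ^ 2 - x) := by nlinarith [sq_nonneg (16 * t - x)]
    have : 0 ≤ ((16 * t - x) ^ 2 + (x ^ 2 - x)) / (32 * t) := by positivity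
    linarith [e1 ▸ (neg_nonpos.mpr this)]
  -- summability of the geometric bound
  have hgeo : Summable (fun m : ℕ => Real.exp (8 * t) * r ^ (m + 1)) := by
    have : Summable (fun m : ℕ => r ^ m) := summable_geometric_of_lt_one hr0.le hr1
    simpa [pow_succ, mul_comm, mul_assoc, mul_left_comm] using (this.mul_left (Real.exp (8 * t) * r))
  have hsum : Summable (fun m : ℕ => Real.exp (((m : ℝ) + 1) - ((m : ℝ) + 1) ^ 2 / (16 * t))) :=
    Summable.of_nonneg_of_le (fun m => (Real.exp_pos _).le) hterm hgeo
  refine ⟨hsum, ?_⟩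
  have htsum_le : ∑' m : ℕ, Real.exp (((m : ℝ) + 1) - ((m : ℝ) + 1) ^ 2 / (16 * t)) ≤
      ∑' m : ℕ, Real.exp (8 * t) * r ^ (m + 1) := Summable.tsum_le_tsum hterm hsum hgeo
  have hgval : ∑' m : ℕ, Real.exp (8 * t) * r ^ (m + 1) =
      Real.exp (8 * t) * r * (1 - r)⁻¹ := by
    have : ∑' m : ℕ, Real.exp (8 * t) * r ^ (m + 1) =
        (Real.exp (8 * t) * r) * ∑' m : ℕ, r ^ m := by
      rw [← tsum_mul_left]
      congr 1 with m
      ring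
    rw [this, tsum_geometric_of_lt_one hr0.le hr1, mul_assoc]
  -- geometric sum value bound: r/(1-r) ≤ 32 t
  have hfrac : r * (1 - r)⁻¹ ≤ 32 * t := by
    have h1r : 0 < 1 - r := by linarith
    rw [← div_eq_mul_inv, div_le_iff₀ h1r]
    have hexp : 1 + 1 / (32 * t) ≤ Real.exp (1 / (32 * t)) := by linarith [Real.add_one_le_exp (1 / (32 * t))]
    have hmul : r * Real.exp (1 / (32 * t)) = 1 := by
      rw [hrdef, ← Real.exp_add]; simp
    have h2 : r * (1 + 1 / (32 * t)) ≤ 1 := by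
      calc r * (1 + 1 / (32 * t)) ≤ r * Real.exp (1 / (32 * t)) :=
            mul_le_mul_of_nonneg_left hexp hr0.le
        _ = 1 := hmul
    have h3 := mul_le_mul_of_nonneg_right h2 h32t.le
    have h4 : r * (1 + 1 / (32 * t)) * (32 * t) = r * (32 * t) + r := by
      field_simp
    nlinarith [h3, h4]
  have hstep : Real.exp (8 * t) * r * (1 - r)⁻¹ ≤ Real.exp (8 * t) * (32 * t) := by
    rw [mul_assoc]
    exact mul_le_mul_of_nonneg_left hfrac (Real.exp_pos _).le
  -- final comparison: 32 t e^{8t} ≤ 32 √t e^{64 t}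
  have hsqrt : Real.sqrt t ≤ Real.exp (56 * t) := by
    rcases le_or_gt t 1 with h | h
    · calc Real.sqrt t ≤ 1 := by
            rw [show (1:ℝ) = Real.sqrt 1 by simp]
            exact Real.sqrt_le_sqrt h
        _ ≤ Real.exp (56 * t) := Real.one_le_exp (by linarith)
    · calc Real.sqrt t ≤ t := by
            nlinarith [Real.sq_sqrt ht.le, Real.sqrt_nonneg t, Real.sqrt_le_sqrt h.le,
              Real.sqrt_one]
        _ ≤ Real.exp t := (Real.add_one_le_exp t).trans' (by linarith)
        _ ≤ Real.exp (56 * t) := Real.exp_le_exp.mpr (by linarith)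
  have hfin : Real.exp (8 * t) * (32 * t) ≤ 32 * Real.sqrt t * Real.exp (64 * t) := by
    have ht' : t = Real.sqrt t * Real.sqrt t := (Real.mul_self_sqrt ht.le).symm
    have h64 : Real.exp (64 * t) = Real.exp (56 * t) * Real.exp (8 * t) := by
      rw [← Real.exp_add]; ring_nf
    calc Real.exp (8 * t) * (32 * t) = 32 * (Real.sqrt t * Real.sqrt t) * Real.exp (8 * t) := by
          rw [← ht']; ring
      _ ≤ 32 * (Real.sqrt t * Real.exp (56 * t)) * Real.exp (8 * t) := by
          apply mul_le_mul_of_nonneg_right _ (Real.exp_pos (8 * t)).le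
          nlinarith [Real.sqrt_nonneg t]
      _ = 32 * Real.sqrt t * Real.exp (64 * t) := by rw [h64]; ring
  calc ∑' m : ℕ, Real.exp (((m : ℝ) + 1) - ((m : ℝ) + 1) ^ 2 / (16 * t))
      ≤ Real.exp (8 * t) * r * (1 - r)⁻¹ := by rw [← hgval]; exact htsum_le
    _ ≤ Real.exp (8 * t) * (32 * t) := hstep
    _ ≤ 32 * Real.sqrt t * Real.exp (64 * t) := hfin
end

section
/- There exists a universal constant C > 0 such that for every t > 0 and every r with 0 < r ≤ 1, the sum over all positive integers k with k·r ≥ 2 of exp(−(log(k·r))²/(8·t)) is at most C · t^{3/2} · e^{16·t} / r. Equivalently, (1/t) · ∑_{k : k·r ≥ 2} exp(−(log(k·r))²/(8·t)) ≤ C · (√t / r) · e^{16·t}. -/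
open scoped Classical

/-!
Write `L = log (k r) ≥ log 2` and split the exponent `L² / (8t)` into two halves. By AM-GM,
`L² / (16t) ≥ 2L - 16t`, so one half contributes at most `e^{16t} / (k r)²`; the other half
is at most `exp (-(log 2)² / (16t))`, which is at most a constant times `t^{3/2}` for all
`t > 0`. Finally `∑_{k ≥ 2/r} 1 / (k r)² ≤ r⁻² · 2 / (2/r) = 1 / r` by the telescoping bound
for `∑ 1/k²`.
-/

open Real Finset
open scoped Nat

lemma exp_neg_le_factorial_div_pow {y : ℝ} (hy : 0 < y) (n : ℕ) :
    exp (-y) ≤ n ! / y ^ n := by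
  rw [exp_neg, inv_le_comm₀ (exp_pos y) (by positivity), inv_div]
  exact pow_div_factorial_le_exp y hy.le n

lemma exists_exp_neg_div_le_mul_rpow {c p : ℝ} (hc : 0 < c) (hp : 0 ≤ p) :
    ∃ C > 0, ∀ t > 0, exp (-c / t) ≤ C * t ^ p := by
  set n := ⌈p⌉₊
  refine ⟨max 1 (n ! / c ^ n), by positivity, fun t ht => ?_⟩
  rcases le_or_gt t 1 with ht1 | ht1
  · calc exp (-c / t) ≤ n ! / (c / t) ^ n := by
          rw [neg_div]; exact exp_neg_le_factorial_div_pow (by positivity) n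
      _ = n ! / c ^ n * t ^ (n : ℝ) := by rw [rpow_natCast, div_pow]; field_simp
      _ ≤ max 1 (n ! / c ^ n) * t ^ p :=
          mul_le_mul (le_max_right _ _) (rpow_le_rpow_of_exponent_ge ht ht1 (Nat.le_ceil p))
            (by positivity) (by positivity)
  · calc exp (-c / t) ≤ 1 :=
          exp_le_one_iff.2 (div_nonpos_of_nonpos_of_nonneg (by linarith) ht.le)
      _ ≤ max 1 (n ! / c ^ n) * t ^ p :=
          one_le_mul_of_one_le_of_one_le (le_max_left _ _) (one_le_rpow ht1.le hp)

lemma sum_ite_inv_succ_sq_le {y : ℝ} (hy : 0 < y) (u : Finset ℕ) :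
    ∑ k ∈ u, (if y ≤ (k : ℝ) + 1 then (((k : ℝ) + 1) ^ 2)⁻¹ else 0) ≤ 2 / y := by
  obtain ⟨M, huM⟩ := u.exists_nat_subset_range
  set m := ⌈y⌉₊ - 1
  have hm : (m : ℝ) + 1 = ⌈y⌉₊ := by
    rw [← Nat.cast_add_one, Nat.sub_add_cancel (Nat.ceil_pos.2 hy)]
  have hsupport : u.filter (fun k : ℕ => y ≤ (k : ℝ) + 1) ⊆ Ico m M := by
    intro k hk
    rw [mem_filter] at hk
    have : ⌈y⌉₊ ≤ k + 1 := Nat.ceil_le.2 (by exact_mod_cast hk.2)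
    exact mem_Ico.2 ⟨by omega, mem_range.1 (huM hk.1)⟩
  calc ∑ k ∈ u, (if y ≤ (k : ℝ) + 1 then (((k : ℝ) + 1) ^ 2)⁻¹ else 0)
      = ∑ k ∈ u.filter (fun k : ℕ => y ≤ (k : ℝ) + 1), (((k : ℝ) + 1) ^ 2)⁻¹ :=
        (sum_filter _ _).symm
    _ ≤ ∑ k ∈ Ico m M, (((k : ℝ) + 1) ^ 2)⁻¹ :=
        sum_le_sum_of_subset_of_nonneg hsupport fun _ _ _ => by positivity
    _ = ∑ i ∈ Ioo m (M + 1), ((i : ℝ) ^ 2)⁻¹ := by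
        rw [← Ico_add_one_left_eq_Ioo, ← sum_Ico_add' (fun i : ℕ => ((i : ℝ) ^ 2)⁻¹)]
        push_cast; rfl
    _ ≤ 2 / ((m : ℝ) + 1) := sum_Ioo_inv_sq_le m (M + 1)
    _ ≤ 2 / y := by rw [hm]; gcongr; exact Nat.le_ceil y

lemma exp_neg_log_sq_le {t x : ℝ} (ht : 0 < t) (hx : 2 ≤ x) :
    exp (-log x ^ 2 / (8 * t)) ≤ exp (16 * t) * exp (-log 2 ^ 2 / (16 * t)) / x ^ 2 := by
  have amgm : 2 * log x - 16 * t ≤ log x ^ 2 / (16 * t) := by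
    rw [le_div_iff₀ (by positivity)]; nlinarith [sq_nonneg (log x - 16 * t)]
  have hlog : log 2 ^ 2 / (16 * t) ≤ log x ^ 2 / (16 * t) := by gcongr
  have hhalves : -log x ^ 2 / (8 * t) = -(log x ^ 2 / (16 * t)) - log x ^ 2 / (16 * t) := by
    field_simp; ring
  have hexp : exp (2 * log x) = x ^ 2 := by
    rw [mul_comm, exp_mul, exp_log (by linarith)]; norm_cast
  calc exp (-log x ^ 2 / (8 * t)) ≤ exp (16 * t - 2 * log x - log 2 ^ 2 / (16 * t)) :=
        exp_le_exp.2 (by linarith)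
    _ = _ := by rw [sub_sub, exp_sub, exp_add, hexp, neg_div, exp_neg]; ring

lemma log_gaussian_term_le {t r : ℝ} (ht : 0 < t) (hr : 0 < r) (k : ℕ) :
    (if 2 ≤ ((k : ℝ) + 1) * r then exp (-(log (((k : ℝ) + 1) * r)) ^ 2 / (8 * t)) else 0) ≤
      exp (16 * t) * exp (-log 2 ^ 2 / (16 * t)) / r ^ 2 *
        if 2 / r ≤ (k : ℝ) + 1 then (((k : ℝ) + 1) ^ 2)⁻¹ else 0 := by
  simp only [div_le_iff₀ hr]
  split
  case isTrue hk =>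
    calc _ ≤ _ := exp_neg_log_sq_le ht hk
      _ = _ := by field_simp
  case isFalse => simp

/-- Bound (14): there is a universal constant `C > 0` such that for all `t > 0` and
`0 < r ≤ 1`, `∑_{k ≥ 1, k r ≥ 2} exp (-(log (k r))² / (8 t)) ≤ C t^{3/2} e^{16 t} / r`. -/
theorem log_gaussian_sum_le :
    ∃ C : ℝ, 0 < C ∧ ∀ t r : ℝ, 0 < t → 0 < r → r ≤ 1 →
      Summable (fun k : ℕ => if 2 ≤ ((k : ℝ) + 1) * r then
        Real.exp (-(Real.log (((k : ℝ) + 1) * r)) ^ 2 / (8 * t)) else 0) ∧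
      ∑' k : ℕ, (if 2 ≤ ((k : ℝ) + 1) * r then
          Real.exp (-(Real.log (((k : ℝ) + 1) * r)) ^ 2 / (8 * t)) else 0) ≤
        C * t ^ ((3 : ℝ) / 2) * Real.exp (16 * t) / r := by
  obtain ⟨C, hC, htime⟩ := exists_exp_neg_div_le_mul_rpow
    (c := log 2 ^ 2 / 16) (p := 3 / 2) (by positivity) (by norm_num)
  refine ⟨C, hC, fun t r ht hr _ => ?_⟩
  set f : ℕ → ℝ := fun k => if 2 ≤ ((k : ℝ) + 1) * r then
    exp (-(log (((k : ℝ) + 1) * r)) ^ 2 / (8 * t)) else 0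
  set D := exp (16 * t) * exp (-log 2 ^ 2 / (16 * t)) / r ^ 2
  have hf_nonneg : 0 ≤ f := fun k => by dsimp only [f]; split <;> positivity
  have hsum : ∀ u : Finset ℕ, ∑ k ∈ u, f k ≤ D * r := fun u =>
    calc ∑ k ∈ u, f k ≤ D * ∑ k ∈ u, _ := by
          rw [mul_sum]; exact sum_le_sum fun k _ => log_gaussian_term_le ht hr k
      _ ≤ D * (2 / (2 / r)) := by gcongr; exact sum_ite_inv_succ_sq_le (by positivity) u
      _ = D * r := by rw [div_div_eq_mul_div, mul_div_cancel_left₀ r two_ne_zero]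
  refine ⟨summable_of_sum_le hf_nonneg hsum, (Real.tsum_le_of_sum_le hf_nonneg hsum).trans ?_⟩
  calc D * r = exp (16 * t) * exp (-(log 2 ^ 2 / 16) / t) / r := by simp only [D]; field_simp
    _ ≤ exp (16 * t) * (C * t ^ ((3 : ℝ) / 2)) / r := by gcongr; exact htime t ht
    _ = C * t ^ ((3 : ℝ) / 2) * exp (16 * t) / r := by ring
end
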